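/- arXiv:2201.08732 — 3 statements merged into one kernel-verified Lean document; each statement's English description precedes it below -/
import Mathlib

section
/- If B and C are d×d positive definite real matrices with B - C positive semidefinite, then for all nonzero vectors x, (xᵀBx)/(xᵀCx) ≤ det(B)/det(C). -/
/-!
With `S = √C`, the matrix `A = S⁻¹ B S⁻¹` satisfies `1 ≤ A` in the Loewner order, so all its
eigenvalues are at least `1` and each of them is bounded by their product `det A`. Hence
`A ≤ det A • 1`, and conjugating back by `S` gives `B ≤ (det B / det C) • C`; evaluating both
quadratic forms at `x` is the claim.
-/

open Matrix Finset
open scoped MatrixOrder ComplexOrder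

namespace Matrix

variable {n 𝕜 : Type*} [Fintype n] [RCLike 𝕜]

theorem dotProduct_mulVec_le_of_le {A B : Matrix n n 𝕜} (h : A ≤ B) (x : n → 𝕜) :
    star x ⬝ᵥ A *ᵥ x ≤ star x ⬝ᵥ B *ᵥ x := by
  simpa [sub_mulVec, dotProduct_sub] using (le_iff.mp h).dotProduct_mulVec_nonneg x

variable [DecidableEq n]

theorem le_det_smul_one_of_one_le {A : Matrix n n 𝕜} (hA : 1 ≤ A) : A ≤ A.det • 1 := by
  have hH : A.IsHermitian := (zero_le_one.trans hA).isSelfAdjoint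
  have one_le_eigenvalues : ∀ i, 1 ≤ hH.eigenvalues i := fun i ↦
    (CFC.one_le_iff A).mp hA _ (hH.eigenvalues_mem_spectrum_real i)
  have spectrum_le_prod : ∀ r ∈ spectrum ℝ A, r ≤ ∏ i, hH.eigenvalues i := by
    rw [hH.spectrum_real_eq_range_eigenvalues]
    rintro _ ⟨i, rfl⟩
    simpa using prod_le_prod_of_subset_of_one_le (subset_univ {i})
      (by simpa using zero_le_one.trans (one_le_eigenvalues i)) (fun j _ _ ↦ one_le_eigenvalues j)
  convert le_algebraMap_of_spectrum_le spectrum_le_prod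
  rw [hH.det_eq_prod_eigenvalues, Algebra.algebraMap_eq_smul_one, ← RCLike.ofReal_prod,
    RCLike.real_smul_eq_coe_smul (K := 𝕜)]

theorem le_det_div_det_smul_of_le {B C : Matrix n n 𝕜} (hC : C.PosDef) (hCB : C ≤ B) :
    B ≤ (B.det / C.det) • C := by
  set S := CFC.sqrt C
  have hSS : S * S = C := CFC.sqrt_mul_sqrt_self C hC.posSemidef.nonneg
  have hS : IsSelfAdjoint S := (CFC.sqrt_nonneg C).isSelfAdjoint
  have hS_det : IsUnit S.det := (isUnit_iff_isUnit_det S).mp hC.isStrictlyPositive.isUnit_cfcSqrt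
  set T := S⁻¹
  have hT : IsSelfAdjoint T := hS.isHermitian.inv
  have hST : S * T = 1 := mul_nonsing_inv S hS_det
  have hTS : T * S = 1 := nonsing_inv_mul S hS_det
  have hTCT : T * C * T = 1 := by rw [← hSS, ← mul_assoc, hTS, one_mul, hST]
  have hSAS : S * (T * B * T) * S = B := by
    simp only [← mul_assoc, hST, one_mul]
    rw [mul_assoc, hTS, mul_one]
  have hdet : (T * B * T).det = B.det / C.det := by
    rw [det_mul, det_mul, det_nonsing_inv, ← hSS, det_mul, Ring.inverse_eq_inv']
    field_simp
  have one_le : 1 ≤ T * B * T := hTCT ▸ hT.conjugate_le_conjugate hCB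
  calc B = S * (T * B * T) * S := hSAS.symm
    _ ≤ S * ((T * B * T).det • 1) * S :=
      hS.conjugate_le_conjugate (le_det_smul_one_of_one_le one_le)
    _ = (B.det / C.det) • C := by rw [hdet, mul_smul_comm, smul_mul_assoc, mul_one, hSS]

end Matrix

theorem quadratic_ratio_le_det_ratio_general (d : ℕ)
    (B C : Matrix (Fin d) (Fin d) ℝ)
    (hC : C.PosDef) (hBC : (B - C).PosSemidef)
    (x : Fin d → ℝ) (hx : x ≠ 0) :
    (x ⬝ᵥ B *ᵥ x) / (x ⬝ᵥ C *ᵥ x) ≤ B.det / C.det := by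
  have hCx : 0 < x ⬝ᵥ C *ᵥ x := by simpa using hC.dotProduct_mulVec_pos hx
  have hB_le : B ≤ (B.det / C.det) • C := le_det_div_det_smul_of_le hC (le_iff.mpr hBC)
  rw [div_le_iff₀ hCx]
  simpa [smul_mulVec] using dotProduct_mulVec_le_of_le hB_le x

/-- If `B ⪰ C ≻ 0` are `d × d` real positive definite matrices, then for every
nonzero vector `x`, `(xᵀBx)/(xᵀCx) ≤ det B / det C`. -/
theorem quadratic_ratio_le_det_ratio (d : ℕ)
    (B C : Matrix (Fin d) (Fin d) ℝ)
    (hB : B.PosDef) (hC : C.PosDef) (hBC : (B - C).PosSemidef)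
    (x : Fin d → ℝ) (hx : x ≠ 0) :
    (x ⬝ᵥ B *ᵥ x) / (x ⬝ᵥ C *ᵥ x) ≤ B.det / C.det :=
  quadratic_ratio_le_det_ratio_general d B C hC hBC x hx
end

section
/- Let V_n = λI + Σ_{n'≤n,h≤H} φ_{n',h}φ_{n',h}ᵀ with ‖φ_{n,h}‖₂² ≤ C_φ, and let w_{n,h}² = φ_{n,h}ᵀ V_{n-1}^{-1} φ_{n,h} (using the Gram matrix fixed at the start of episode n). Then Σ_{n=1}^N Σ_{h=1}^H min(1, w_{n,h}²) ≤ 2H·d·ln(1 + N H C_φ/(λ d)). -/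
/-!
Each term is controlled by the growth of the potential `log det V_n`. By the matrix determinant
lemma, `det (V_n + φφᵀ) = det V_n · (1 + φᵀ V_n⁻¹ φ)`, and since adding the remaining features of
episode `n` only increases the determinant, every one of the `H` stale terms of episode `n`
satisfies `min 1 w² ≤ 2 log (1 + w²) ≤ 2 (log det V_{n+1} - log det V_n)`. Summing telescopes to
`2H (log det V_N - log det V_0)`; finally `log det V_0 = d log λ`, and AM-GM on the eigenvalues
bounds `log det V_N` by `d log (tr V_N / d) ≤ d log (λ + N H C_φ / d)`.
-/

open Matrix Finset Real

theorem Matrix.det_add_vecMulVec {m R : Type*} [Fintype m] [DecidableEq m] [CommRing R]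
    {A : Matrix m m R} (hA : IsUnit A.det) (u v : m → R) :
    (A + vecMulVec u v).det = A.det * (1 + v ⬝ᵥ A⁻¹ *ᵥ u) := by
  rw [vecMulVec_eq Unit, det_add_replicateCol_mul_replicateRow hA, Matrix.mul_assoc,
    ← replicateCol_mulVec, det_unique (n := Unit), Matrix.add_apply, one_apply_eq,
    replicateRow_mul_replicateCol_apply]

theorem Matrix.posSemidef_vecMulVec_self {m : Type*} [Fintype m] (v : m → ℝ) :
    (vecMulVec v v).PosSemidef := by
  simpa using posSemidef_vecMulVec_self_star v

namespace Matrix.PosDef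

variable {m : Type*} [Fintype m] [DecidableEq m] {A : Matrix m m ℝ}

theorem dotProduct_inv_mulVec_nonneg (hA : A.PosDef) (v : m → ℝ) : 0 ≤ v ⬝ᵥ A⁻¹ *ᵥ v := by
  simpa using hA.inv.posSemidef.dotProduct_mulVec_nonneg v

theorem det_le_det_add_vecMulVec_self (hA : A.PosDef) (v : m → ℝ) :
    A.det ≤ (A + vecMulVec v v).det := by
  rw [det_add_vecMulVec hA.det_pos.ne'.isUnit]
  nlinarith [hA.det_pos, hA.dotProduct_inv_mulVec_nonneg v]

theorem det_le_det_add_sum_vecMulVec_self {ι : Type*} (hA : A.PosDef) (s : Finset ι)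
    (v : ι → m → ℝ) : A.det ≤ (A + ∑ i ∈ s, vecMulVec (v i) (v i)).det := by
  classical
  induction s using Finset.induction generalizing A with
  | empty => simp
  | insert a s ha ih =>
    rw [sum_insert ha, ← add_assoc]
    exact (hA.det_le_det_add_vecMulVec_self (v a)).trans
      (ih (hA.add_posSemidef (posSemidef_vecMulVec_self (v a))))

theorem log_one_add_le_log_det_add_sum_sub {ι : Type*} (hA : A.PosDef) {s : Finset ι} {i : ι}
    (hi : i ∈ s) (v : ι → m → ℝ) :
    log (1 + v i ⬝ᵥ A⁻¹ *ᵥ v i) ≤ log (A + ∑ j ∈ s, vecMulVec (v j) (v j)).det - log A.det := by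
  classical
  have hAv : (A + vecMulVec (v i) (v i)).PosDef :=
    hA.add_posSemidef (posSemidef_vecMulVec_self (v i))
  have hdet : A.det * (1 + v i ⬝ᵥ A⁻¹ *ᵥ v i) ≤ (A + ∑ j ∈ s, vecMulVec (v j) (v j)).det := by
    rw [← add_sum_erase _ _ hi, ← add_assoc, ← det_add_vecMulVec hA.det_pos.ne'.isUnit]
    exact hAv.det_le_det_add_sum_vecMulVec_self _ v
  have hpos : 0 < 1 + v i ⬝ᵥ A⁻¹ *ᵥ v i := by
    linarith [hA.dotProduct_inv_mulVec_nonneg (v i)]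
  have hlog := log_le_log (by have := hA.det_pos; positivity) hdet
  rw [log_mul hA.det_pos.ne' hpos.ne'] at hlog
  linarith

theorem log_det_le_card_mul_log [Nonempty m] (hA : A.PosDef) {t : ℝ}
    (ht : A.trace ≤ Fintype.card m * t) : log A.det ≤ Fintype.card m * log t := by
  set μ := hA.isHermitian.eigenvalues
  have hcard : (0 : ℝ) < Fintype.card m := by exact_mod_cast Fintype.card_pos
  have hdet : A.det = ∏ i, μ i := by simpa using hA.isHermitian.det_eq_prod_eigenvalues
  have htr : A.trace = ∑ i, μ i := by simpa using hA.isHermitian.trace_eq_sum_eigenvalues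
  have jensen := strictConcaveOn_log_Ioi.concaveOn.le_map_sum (t := univ)
    (w := fun _ => (Fintype.card m : ℝ)⁻¹) (p := μ) (by intros; positivity)
    (by simp [hcard.ne']) (fun i _ => hA.eigenvalues_pos i)
  simp only [smul_eq_mul, ← mul_sum, ← htr] at jensen
  have hmono : log ((Fintype.card m : ℝ)⁻¹ * A.trace) ≤ log t :=
    log_le_log (by have := hA.trace_pos; positivity) (by rwa [inv_mul_le_iff₀ hcard])
  rw [inv_mul_le_iff₀ hcard] at jensen
  rw [hdet, log_prod fun i _ => (hA.eigenvalues_pos i).ne']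
  exact jensen.trans (mul_le_mul_of_nonneg_left hmono hcard.le)

end Matrix.PosDef

theorem Matrix.log_det_smul_one_add_sum_vecMulVec_le {m ι : Type*} [Fintype m] [DecidableEq m]
    [Nonempty m] {lam S : ℝ}
    (hlam : 0 < lam) (s : Finset ι) (v : ι → m → ℝ) (hS : ∑ i ∈ s, v i ⬝ᵥ v i ≤ S) :
    log (lam • (1 : Matrix m m ℝ) + ∑ i ∈ s, vecMulVec (v i) (v i)).det
      ≤ Fintype.card m * (log lam + log (1 + S / (lam * Fintype.card m))) := by
  set x := S / (lam * Fintype.card m)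
  have hA := (PosDef.one.smul hlam).add_posSemidef (posSemidef_sum s fun i _ =>
    posSemidef_vecMulVec_self (m := m) (v i))
  have htrace : (lam • (1 : Matrix m m ℝ) + ∑ i ∈ s, vecMulVec (v i) (v i)).trace
      ≤ Fintype.card m * (lam * (1 + x)) := by
    have hcard : (Fintype.card m : ℝ) ≠ 0 := by exact_mod_cast Fintype.card_ne_zero
    simp only [trace_add, trace_smul, trace_one, trace_sum, trace_vecMulVec, smul_eq_mul, x]
    field_simp
    linarith
  have hx : 0 < 1 + x := pos_of_mul_pos_right
    (pos_of_mul_pos_right (hA.trace_pos.trans_le htrace) (Nat.cast_nonneg _)) hlam.le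
  rw [← log_mul hlam.ne' hx.ne']
  exact hA.log_det_le_card_mul_log htrace

theorem min_one_le_two_mul_log_one_add {x : ℝ} (hx : 0 ≤ x) : min 1 x ≤ 2 * log (1 + x) := by
  have hlog := le_log_one_add_of_nonneg hx
  have hmin : min 1 x ≤ 2 * (2 * x / (x + 2)) := by
    rw [mul_div_assoc', le_div_iff₀ (by linarith)]
    rcases le_total x 1 with h | h
    · rw [min_eq_right h]; nlinarith
    · rw [min_eq_left h]; linarith
  linarith

theorem sum_range_sum_range_le_mul_sum {N H : ℕ} {f : ℕ → ℕ → ℝ} {g : ℕ → ℝ}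
    (h : ∀ n < N, ∀ i < H, f n i ≤ g n) :
    ∑ n ∈ range N, ∑ i ∈ range H, f n i ≤ H * ∑ n ∈ range N, g n := by
  rw [mul_sum]
  refine sum_le_sum fun n hn => ?_
  refine (sum_le_card_nsmul _ _ _ fun i hi => h n (mem_range.1 hn) i (mem_range.1 hi)).trans ?_
  simp

/-- Stale-feature log-determinant lemma (Lemma 8 of Yang–Wang style): with
`V_n = λI + Σ_{n'<n} Σ_{h<H} φ_{n',h}φ_{n',h}ᵀ` held fixed within episode `n`, and
`w_{n,h}² = φ_{n,h}ᵀ V_n⁻¹ φ_{n,h}`, if `‖φ_{n,h}‖₂² ≤ C_φ` then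
`Σ_{n<N} Σ_{h<H} min(1, w_{n,h}²) ≤ 2 H d ln(1 + N H C_φ/(λ d))`. -/
theorem stale_feature_log_det (d N H : ℕ) (hd : 0 < d)
    (lam : ℝ) (hlam : 0 < lam)
    (φ : ℕ → ℕ → Fin d → ℝ) (Cφ : ℝ)
    (hφ : ∀ n < N, ∀ h < H, ∑ i : Fin d, (φ n h i) ^ 2 ≤ Cφ)
    (V : ℕ → Matrix (Fin d) (Fin d) ℝ)
    (hV : ∀ n, V n = lam • (1 : Matrix (Fin d) (Fin d) ℝ)
        + ∑ n' ∈ Finset.range n, ∑ h ∈ Finset.range H, vecMulVec (φ n' h) (φ n' h)) :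
    ∑ n ∈ Finset.range N, ∑ h ∈ Finset.range H,
        min 1 (φ n h ⬝ᵥ (V n)⁻¹ *ᵥ φ n h)
      ≤ 2 * H * d * Real.log (1 + N * H * Cφ / (lam * d)) := by
  have hVsucc (n : ℕ) : V (n + 1) = V n + ∑ h ∈ range H, vecMulVec (φ n h) (φ n h) := by
    rw [hV, hV, sum_range_succ, add_assoc]
  have hVpd (n : ℕ) : (V n).PosDef := hV n ▸ (PosDef.one.smul hlam).add_posSemidef
    (posSemidef_sum _ fun _ _ => posSemidef_sum _ fun _ _ => posSemidef_vecMulVec_self _)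
  have hstep : ∀ n < N, ∀ h < H, min 1 (φ n h ⬝ᵥ (V n)⁻¹ *ᵥ φ n h)
      ≤ 2 * log (V (n + 1)).det - 2 * log (V n).det := fun n _ h hh => by
    have hlog := (hVpd n).log_one_add_le_log_det_add_sum_sub (mem_range.2 hh) (φ n)
    rw [← hVsucc] at hlog
    linarith [min_one_le_two_mul_log_one_add ((hVpd n).dotProduct_inv_mulVec_nonneg (φ n h))]
  have hdetN : log (V N).det ≤ d * (log lam + log (1 + N * H * Cφ / (lam * d))) := by
    have : Nonempty (Fin d) := Fin.pos_iff_nonempty.1 hd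
    have hS : ∑ p ∈ range N ×ˢ range H, φ p.1 p.2 ⬝ᵥ φ p.1 p.2 ≤ N * H * Cφ := by
      refine (sum_le_card_nsmul _ _ Cφ fun p hp => ?_).trans_eq (by simp [mul_assoc])
      rw [mem_product, mem_range, mem_range] at hp
      simpa [dotProduct, sq] using hφ p.1 hp.1 p.2 hp.2
    simpa [hV, sum_product] using
      log_det_smul_one_add_sum_vecMulVec_le hlam _ (fun p : ℕ × ℕ => φ p.1 p.2) hS
  have hdet0 : log (V 0).det = d * log lam := by simp [hV]
  calc _ ≤ H * ∑ n ∈ range N, (2 * log (V (n + 1)).det - 2 * log (V n).det) :=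
        sum_range_sum_range_le_mul_sum hstep
    _ = H * (2 * log (V N).det - 2 * log (V 0).det) := by
      rw [sum_range_sub fun n => 2 * log (V n).det]
    _ ≤ H * (2 * (d * (log lam + log (1 + N * H * Cφ / (lam * d)))) - 2 * (d * log lam)) := by
      rw [hdet0]; gcongr
    _ = 2 * H * d * log (1 + N * H * Cφ / (lam * d)) := by ring
end

section
/- Let V_{n+1} = V_n + Σ_{h=1}^H φ_{n,h}φ_{n,h}ᵀ with V_n positive definite, and w_{n,h}² = φ_{n,h}ᵀ V_n^{-1} φ_{n,h}. Then det(V_{n+1}) ≥ det(V_n) · Π_{h=1}^H (1 + w_{n,h}²)^{1/H}. -/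
/-!
By the matrix determinant lemma, adding the single term `φ_h φ_hᵀ` to `V_n` multiplies the
determinant by `1 + w_h²`, and adding further positive semidefinite rank-one terms never
decreases the determinant. Hence every factor `1 + w_h²` is at most `det V_{n+1} / det V_n`,
and so is their geometric mean.
-/

open Matrix

namespace Matrix

variable {n : Type*} [Fintype n]

theorem posSemidef_vecMulVec_self_s11 (u : n → ℝ) : (vecMulVec u u).PosSemidef := by
  simpa using posSemidef_vecMulVec_self_star u

theorem posSemidef_sum_vecMulVec_self {ι : Type*} (s : Finset ι) (u : ι → n → ℝ) :
    (∑ i ∈ s, vecMulVec (u i) (u i)).PosSemidef :=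
  Finset.sum_induction _ PosSemidef (fun _ _ => PosSemidef.add) PosSemidef.zero
    fun i _ => posSemidef_vecMulVec_self_s11 (u i)

variable [DecidableEq n]

theorem det_add_vecMulVec_s11 {α : Type*} [CommRing α] {A : Matrix n n α} (hA : IsUnit A.det)
    (u v : n → α) : (A + vecMulVec u v).det = A.det * (1 + v ⬝ᵥ A⁻¹ *ᵥ u) := by
  rw [vecMulVec_eq Unit, det_add_replicateCol_mul_replicateRow hA, Matrix.mul_assoc,
    ← replicateCol_mulVec, replicateRow_mul_replicateCol, det_unique (n := Unit)]
  rfl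

theorem PosDef.dotProduct_inv_mulVec_self_nonneg {A : Matrix n n ℝ} (hA : A.PosDef)
    (u : n → ℝ) : 0 ≤ u ⬝ᵥ A⁻¹ *ᵥ u := by
  simpa using hA.inv.posSemidef.dotProduct_mulVec_nonneg u

theorem PosDef.det_le_det_add_vecMulVec_self_s11 {A : Matrix n n ℝ} (hA : A.PosDef) (u : n → ℝ) :
    A.det ≤ (A + vecMulVec u u).det := by
  rw [det_add_vecMulVec_s11 hA.det_pos.ne'.isUnit u u]
  nlinarith [hA.det_pos, hA.dotProduct_inv_mulVec_self_nonneg u]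

theorem PosDef.det_le_det_add_sum_vecMulVec_self_s11 {A : Matrix n n ℝ} (hA : A.PosDef)
    {ι : Type*} (s : Finset ι) (u : ι → n → ℝ) :
    A.det ≤ (A + ∑ i ∈ s, vecMulVec (u i) (u i)).det := by
  classical
  induction s using Finset.induction_on with
  | empty => simp
  | insert i s hi ih =>
    rw [Finset.sum_insert hi, add_comm (vecMulVec _ _), ← add_assoc]
    exact ih.trans <|
      (hA.add_posSemidef (posSemidef_sum_vecMulVec_self s u)).det_le_det_add_vecMulVec_self_s11 _

end Matrix

theorem Real.prod_rpow_one_div_card_le {ι : Type*} {s : Finset ι} (hs : s.Nonempty)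
    {f : ι → ℝ} {r : ℝ} (hf0 : ∀ i ∈ s, 0 ≤ f i) (hfr : ∀ i ∈ s, f i ≤ r) :
    ∏ i ∈ s, f i ^ ((1 : ℝ) / s.card) ≤ r := by
  obtain ⟨i, hi⟩ := hs
  have hr : 0 ≤ r := (hf0 i hi).trans (hfr i hi)
  rw [Real.finsetProd_rpow s f hf0, one_div]
  calc (∏ i ∈ s, f i) ^ ((s.card : ℝ)⁻¹) ≤ (∏ _j ∈ s, r) ^ ((s.card : ℝ)⁻¹) :=
        Real.rpow_le_rpow (Finset.prod_nonneg hf0) (Finset.prod_le_prod hf0 hfr) (by positivity)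
    _ = r := by rw [Finset.prod_const, Real.pow_rpow_inv_natCast hr (Finset.card_ne_zero_of_mem hi)]

/-- With `V_{n+1} = V_n + Σ_{h<H} φ_h φ_hᵀ`, `V_n ≻ 0`, and
`w_h² = φ_hᵀ V_n⁻¹ φ_h`, one has `det V_{n+1} ≥ det V_n · Π_{h<H} (1 + w_h²)^{1/H}`. -/
theorem det_next_ge_prod (d H : ℕ) (hH : 0 < H)
    (Vn : Matrix (Fin d) (Fin d) ℝ) (hVn : Vn.PosDef)
    (φ : ℕ → Fin d → ℝ) :
    (Vn + ∑ h ∈ Finset.range H, vecMulVec (φ h) (φ h)).det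
      ≥ Vn.det * ∏ h ∈ Finset.range H,
          (1 + φ h ⬝ᵥ Vn⁻¹ *ᵥ φ h) ^ ((1 : ℝ) / H) := by
  have hdet := hVn.det_pos
  have hfactor (h : ℕ) (hh : h ∈ Finset.range H) : 1 + φ h ⬝ᵥ Vn⁻¹ *ᵥ φ h ≤
      (Vn + ∑ h ∈ Finset.range H, vecMulVec (φ h) (φ h)).det / Vn.det := by
    rw [le_div_iff₀' hdet, ← det_add_vecMulVec_s11 hdet.ne'.isUnit, ← Finset.add_sum_erase _ _ hh,
      ← add_assoc]
    exact (hVn.add_posSemidef (posSemidef_vecMulVec_self_s11 _)).det_le_det_add_sum_vecMulVec_self_s11 _ _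
  have hgeom := Real.prod_rpow_one_div_card_le (Finset.nonempty_range_iff.mpr hH.ne')
    (fun h _ => by linarith [hVn.dotProduct_inv_mulVec_self_nonneg (φ h)]) hfactor
  rw [Finset.card_range] at hgeom
  calc Vn.det * _ ≤ Vn.det * (_ / Vn.det) := by gcongr
    _ = _ := mul_div_cancel₀ _ hdet.ne'
end
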